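/- Let ρ be a density matrix on ℂ^D and let σ = Σ_{i=1}^{N} p_i |ψ_i⟩⟨ψ_i| where ψ_1,…,ψ_N are unit vectors in ℂ^D and p_i ≥ 0 with Σ_i p_i = 1. Then F(ρ, σ) ≤ N · max_{1≤i≤N} F(ρ, |ψ_i⟩⟨ψ_i|). -/

import Mathlib

/-!
Let `A = |√ρ √σ|`, so that `F(ρ, σ) = (Tr A)²`. Since `A² = √σ ρ √σ`, we have `Tr A² = Tr (σ ρ)`,
and `rank A ≤ rank σ ≤ N`. Cauchy–Schwarz on the nonzero eigenvalues of `A` gives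
`(Tr A)² ≤ rank A · Tr A²`, hence `F(ρ, σ) ≤ N · Tr (σ ρ) = N · Σᵢ pᵢ Tr (|ψᵢ⟩⟨ψᵢ| ρ)`.
For rank-one `σ` Cauchy–Schwarz is an equality, so `Tr (|ψᵢ⟩⟨ψᵢ| ρ) = F(ρ, |ψᵢ⟩⟨ψᵢ|)`, and a convex
combination of these is at most their maximum.
-/

open Matrix MeasureTheory
open scoped Kronecker ComplexOrder

noncomputable section

/-- The positive semidefinite square root of a matrix (junk value `0` if not PSD). -/
def matSqrt {ι : Type*} [Fintype ι] [DecidableEq ι] (A : Matrix ι ι ℂ) : Matrix ι ι ℂ :=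
  open Classical in if h : A.PosSemidef then
    (h.1.eigenvectorUnitary : Matrix ι ι ℂ) *
      diagonal ((↑) ∘ (Real.sqrt ·) ∘ h.1.eigenvalues) * (star h.1.eigenvectorUnitary : Matrix ι ι ℂ)
  else 0

/-- The matrix absolute value `|X| = √(XᴴX)`. -/
def matAbs {ι : Type*} [Fintype ι] [DecidableEq ι] (X : Matrix ι ι ℂ) : Matrix ι ι ℂ :=
  matSqrt (Xᴴ * X)

/-- Uhlmann fidelity `F(ρ,σ) = (Tr|√ρ√σ|)²`. -/
def fid {ι : Type*} [Fintype ι] [DecidableEq ι] (ρ σ : Matrix ι ι ℂ) : ℝ :=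
  ((matAbs (matSqrt ρ * matSqrt σ)).trace).re ^ 2

/-- A density matrix: positive semidefinite with unit trace. -/
def IsDensity {ι : Type*} [Fintype ι] [DecidableEq ι] (ρ : Matrix ι ι ℂ) : Prop :=
  ρ.PosSemidef ∧ ρ.trace = 1

/-- The rank-one projector `|ψ⟩⟨ψ|`. -/
def ketbra {ι : Type*} (ψ : ι → ℂ) : Matrix ι ι ℂ := Matrix.vecMulVec ψ (star ψ)

/-- The `l`-fold tensor power of a matrix on `ℂ^d`, acting on `(ℂ^d)^{⊗l}`. -/
def tpow {d : ℕ} (M : Matrix (Fin d) (Fin d) ℂ) (l : ℕ) :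
    Matrix (Fin l → Fin d) (Fin l → Fin d) ℂ :=
  Matrix.of fun f g => ∏ i, M (f i) (g i)

/-- Loewner order: `A ⪯ B` iff `B - A` is positive semidefinite. -/
def loewnerLE {ι : Type*} [Fintype ι] (A B : Matrix ι ι ℂ) : Prop := (B - A).PosSemidef

/-- Projector onto the symmetric subspace of `(ℂ^d)^{⊗l}`:
`(1/l!) Σ_{π ∈ S_l} U_π` where `U_π` permutes the tensor factors. -/
def symProj (d l : ℕ) : Matrix (Fin l → Fin d) (Fin l → Fin d) ℂ :=
  (l.factorial : ℂ)⁻¹ •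
    ∑ π : Equiv.Perm (Fin l), Matrix.of fun f g => if f = (fun i => g (π i)) then (1 : ℂ) else 0

open Finset

theorem sq_sum_le_mul_sum_sq_of_card_support_le {ι : Type*} [Fintype ι] (f : ι → ℝ) {k : ℕ}
    (hk : #{i | f i ≠ 0} ≤ k) : (∑ i, f i) ^ 2 ≤ k * ∑ i, f i ^ 2 :=
  calc (∑ i, f i) ^ 2 = (∑ i with f i ≠ 0, f i) ^ 2 := by rw [sum_filter_ne_zero]
    _ ≤ #{i | f i ≠ 0} * ∑ i with f i ≠ 0, f i ^ 2 := sq_sum_le_card_mul_sum_sq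
    _ ≤ k * ∑ i, f i ^ 2 := mul_le_mul (by exact_mod_cast hk)
        (sum_le_sum_of_subset_of_nonneg (filter_subset _ _) fun _ _ _ ↦ sq_nonneg _)
        (by positivity) (by positivity)

theorem sq_sum_eq_sum_sq_of_card_support_le_one {ι : Type*} [Fintype ι] (f : ι → ℝ)
    (h : #{i | f i ≠ 0} ≤ 1) : (∑ i, f i) ^ 2 = ∑ i, f i ^ 2 := by
  rcases isEmpty_or_nonempty ι with _ | _
  · simp
  obtain ⟨a, ha⟩ := card_le_one_iff_subset_singleton.mp h
  have hf : ∀ i ≠ a, f i = 0 := fun i hi ↦ by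
    by_contra hfi
    exact hi (mem_singleton.mp (ha (by simpa using hfi)))
  rw [Fintype.sum_eq_single a hf, Fintype.sum_eq_single a fun i hi ↦ by simp [hf i hi]]

namespace Matrix

theorem rank_add_le {m n K : Type*} [Fintype n] [Field K] (A B : Matrix m n K) :
    (A + B).rank ≤ A.rank + B.rank := by
  rw [rank, rank, rank, mulVecLin_add]
  exact (Submodule.finrank_mono (LinearMap.range_add_le _ _)).trans
    (Submodule.finrank_add_le_finrank_add_finrank _ _)

theorem rank_sum_le {m n K η : Type*} [Fintype n] [Field K] (s : Finset η)
    (A : η → Matrix m n K) : (∑ i ∈ s, A i).rank ≤ ∑ i ∈ s, (A i).rank :=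
  Finset.sum_hom_rel (r := fun (B : Matrix m n K) k ↦ B.rank ≤ k) rank_zero.le fun _ _ _ h ↦
    (rank_add_le _ _).trans (by gcongr)

namespace IsHermitian

variable {ι 𝕜 : Type*} [Fintype ι] [DecidableEq ι] [RCLike 𝕜] {A : Matrix ι ι 𝕜}

theorem trace_mul_self_eq_sum_sq (hA : A.IsHermitian) :
    (A * A).trace = ∑ i, ((hA.eigenvalues i ^ 2 : ℝ) : 𝕜) := by
  conv_lhs => rw [hA.spectral_theorem, ← map_mul]
  rw [Unitary.conjStarAlgAut_apply, trace_mul_cycle,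
    Unitary.coe_star_mul_self, one_mul, diagonal_mul_diagonal, trace_diagonal]
  simp [sq]

theorem re_trace_sq_le_mul_re_trace_mul_self (hA : A.IsHermitian) {k : ℕ} (hk : A.rank ≤ k) :
    RCLike.re A.trace ^ 2 ≤ k * RCLike.re (A * A).trace := by
  rw [hA.rank_eq_card_non_zero_eigs, Fintype.card_subtype] at hk
  simpa [hA.trace_eq_sum_eigenvalues, hA.trace_mul_self_eq_sum_sq]
    using sq_sum_le_mul_sum_sq_of_card_support_le _ hk

theorem re_trace_sq_eq_re_trace_mul_self_of_rank_le_one (hA : A.IsHermitian)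
    (h : A.rank ≤ 1) : RCLike.re A.trace ^ 2 = RCLike.re (A * A).trace := by
  rw [hA.rank_eq_card_non_zero_eigs, Fintype.card_subtype] at h
  simpa [hA.trace_eq_sum_eigenvalues, hA.trace_mul_self_eq_sum_sq]
    using sq_sum_eq_sum_sq_of_card_support_le_one _ h

end IsHermitian

end Matrix

section Fidelity

variable {ι : Type*} [Fintype ι] [DecidableEq ι] {ρ σ : Matrix ι ι ℂ}

theorem matSqrt_eq_cfc (hρ : ρ.PosSemidef) : matSqrt ρ = cfc Real.sqrt ρ := by
  rw [matSqrt, dif_pos hρ, hρ.1.cfc_eq, IsHermitian.cfc, Unitary.conjStarAlgAut_apply]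
  rfl

open scoped MatrixOrder in
theorem posSemidef_matSqrt (hρ : ρ.PosSemidef) : (matSqrt ρ).PosSemidef := by
  rw [matSqrt_eq_cfc hρ]
  exact (cfc_nonneg fun x _ ↦ Real.sqrt_nonneg x).posSemidef

open scoped MatrixOrder in
theorem matSqrt_mul_self (hρ : ρ.PosSemidef) : matSqrt ρ * matSqrt ρ = ρ := by
  rw [matSqrt_eq_cfc hρ, ← cfc_mul Real.sqrt Real.sqrt ρ]
  conv_rhs => rw [← cfc_id' ℝ ρ]
  exact cfc_congr fun x hx ↦ Real.mul_self_sqrt (spectrum_nonneg_of_nonneg hρ.nonneg hx)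

theorem rank_matSqrt (hρ : ρ.PosSemidef) : (matSqrt ρ).rank = ρ.rank := by
  rw [← rank_conjTranspose_mul_self, (posSemidef_matSqrt hρ).isHermitian.eq,
    matSqrt_mul_self hρ]

theorem posSemidef_matAbs (X : Matrix ι ι ℂ) : (matAbs X).PosSemidef :=
  posSemidef_matSqrt (posSemidef_conjTranspose_mul_self X)

theorem matAbs_mul_self (X : Matrix ι ι ℂ) : matAbs X * matAbs X = Xᴴ * X :=
  matSqrt_mul_self (posSemidef_conjTranspose_mul_self X)

theorem rank_matAbs (X : Matrix ι ι ℂ) : (matAbs X).rank = X.rank := by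
  rw [matAbs, rank_matSqrt (posSemidef_conjTranspose_mul_self X), rank_conjTranspose_mul_self]

theorem rank_matAbs_matSqrt_mul_matSqrt_le (hσ : σ.PosSemidef) :
    (matAbs (matSqrt ρ * matSqrt σ)).rank ≤ σ.rank := by
  rw [rank_matAbs, ← rank_matSqrt hσ]
  exact rank_mul_le_right _ _

theorem trace_matAbs_mul_self_matSqrt_mul_matSqrt (hρ : ρ.PosSemidef) (hσ : σ.PosSemidef) :
    (matAbs (matSqrt ρ * matSqrt σ) * matAbs (matSqrt ρ * matSqrt σ)).trace = (σ * ρ).trace := by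
  rw [matAbs_mul_self, conjTranspose_mul, (posSemidef_matSqrt hρ).isHermitian.eq,
    (posSemidef_matSqrt hσ).isHermitian.eq, Matrix.mul_assoc, ← Matrix.mul_assoc (matSqrt ρ),
    matSqrt_mul_self hρ, ← Matrix.mul_assoc, trace_mul_cycle, matSqrt_mul_self hσ]

theorem fid_le_mul_re_trace (hρ : ρ.PosSemidef) (hσ : σ.PosSemidef) {k : ℕ}
    (hk : σ.rank ≤ k) : fid ρ σ ≤ k * (σ * ρ).trace.re := by
  rw [fid, ← trace_matAbs_mul_self_matSqrt_mul_matSqrt hρ hσ]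
  exact (posSemidef_matAbs _).isHermitian.re_trace_sq_le_mul_re_trace_mul_self
    ((rank_matAbs_matSqrt_mul_matSqrt_le hσ).trans hk)

theorem fid_eq_re_trace_of_rank_le_one (hρ : ρ.PosSemidef) (hσ : σ.PosSemidef)
    (h : σ.rank ≤ 1) : fid ρ σ = (σ * ρ).trace.re := by
  rw [fid, ← trace_matAbs_mul_self_matSqrt_mul_matSqrt hρ hσ]
  exact (posSemidef_matAbs _).isHermitian.re_trace_sq_eq_re_trace_mul_self_of_rank_le_one
    ((rank_matAbs_matSqrt_mul_matSqrt_le hσ).trans h)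

theorem fid_ketbra (hρ : ρ.PosSemidef) (ψ : ι → ℂ) :
    fid ρ (ketbra ψ) = (ketbra ψ * ρ).trace.re :=
  fid_eq_re_trace_of_rank_le_one hρ (posSemidef_vecMulVec_self_star ψ) (rank_vecMulVec_le _ _)

end Fidelity

theorem fidelity_rank_inequality_general (D : ℕ) (N : ℕ)
    (ρ : Matrix (Fin D) (Fin D) ℂ) (hρ : IsDensity ρ)
    (ψ : Fin N → (Fin D → ℂ))
    (p : Fin N → ℝ) (hp : ∀ i, 0 ≤ p i) (hpsum : ∑ i, p i = 1)
    (σ : Matrix (Fin D) (Fin D) ℂ) (hσ : σ = ∑ i, (p i : ℂ) • ketbra (ψ i)) :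
    fid ρ σ ≤ N * ⨆ i : Fin N, fid ρ (ketbra (ψ i)) := by
  set F := fun i ↦ fid ρ (ketbra (ψ i))
  have hσ_psd : σ.PosSemidef := hσ ▸ posSemidef_sum _ fun i _ ↦
    (posSemidef_vecMulVec_self_star (ψ i)).smul (by exact_mod_cast hp i)
  have hσ_rank : σ.rank ≤ N := by
    have h_one : ∀ i, ((p i : ℂ) • ketbra (ψ i)).rank ≤ 1 := fun i ↦ by
      rw [ketbra, ← smul_vecMulVec]
      exact rank_vecMulVec_le _ _
    rw [hσ]
    exact (rank_sum_le _ _).trans ((sum_le_sum fun i _ ↦ h_one i).trans (by simp))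
  have hσ_trace : (σ * ρ).trace.re = ∑ i, p i * F i := by
    simp [hσ, F, Finset.sum_mul, trace_sum, fid_ketbra hρ.1]
  calc fid ρ σ ≤ N * (σ * ρ).trace.re := fid_le_mul_re_trace hρ.1 hσ_psd hσ_rank
    _ ≤ N * ∑ i, p i * ⨆ j, F j := by
        rw [hσ_trace]
        gcongr with i
        · exact hp i
        · exact le_ciSup (Set.finite_range F).bddAbove i
    _ = N * ⨆ j, F j := by rw [← Finset.sum_mul, hpsum, one_mul]

/-- rank inequality for the fidelity,
`F(ρ, Σᵢ pᵢ|ψᵢ⟩⟨ψᵢ|) ≤ N · maxᵢ F(ρ, |ψᵢ⟩⟨ψᵢ|)`. -/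
theorem fidelity_rank_inequality (D : ℕ) (hD : 1 ≤ D) (N : ℕ) (hN : 1 ≤ N)
    (ρ : Matrix (Fin D) (Fin D) ℂ) (hρ : IsDensity ρ)
    (ψ : Fin N → (Fin D → ℂ)) (hψ : ∀ i, star (ψ i) ⬝ᵥ ψ i = 1)
    (p : Fin N → ℝ) (hp : ∀ i, 0 ≤ p i) (hpsum : ∑ i, p i = 1)
    (σ : Matrix (Fin D) (Fin D) ℂ) (hσ : σ = ∑ i, (p i : ℂ) • ketbra (ψ i)) :
    fid ρ σ ≤ N * ⨆ i : Fin N, fid ρ (ketbra (ψ i)) :=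
  fidelity_rank_inequality_general D N ρ hρ ψ p hp hpsum σ hσ
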